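/- arXiv:2208.14566 — 2 statements merged into one kernel-verified Lean document; each statement's English description precedes it below -/
import Mathlib

section
/- Let r ≥ 3 be an odd integer and let q = exp(2πi/r) ∈ ℂ. Then in the polynomial ring ℂ[x] one has exp_q^<(x) · exp_{q^{-1}}^<(−x) ≡ 1 (mod x^r); that is, x^r divides exp_q^<(x) · exp_{q^{-1}}^<(−x) − 1. -/
/-!
The coefficients `aₙ` of `exp_q^<(x)` and `bₙ` of `exp_{q⁻¹}^<(-x)` satisfy
`[n+1] a_{n+1} = qⁿ aₙ` and `[n+1] b_{n+1} = -q⁻ⁿ bₙ` as long as `n + 1 < r`. Together with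
`[i+j] = qʲ[i] + q⁻ⁱ[j]` this gives `[k+1] s_{k+1} = (qᵏ - q⁻ᵏ) s_k` for the convolution
`s_k = ∑_{i+j=k} aᵢ bⱼ`, so `s₁ = 0` and then `s_k = 0` for `0 < k < r`, while `s₀ = 1`.
The quantum integers `[n]`, `0 < n < r`, do not vanish because `q²` is again a primitive
`r`-th root of unity when `r` is odd.
-/

open Polynomial

/-- The quantum integer `[n] = (qⁿ - q⁻ⁿ)/(q - q⁻¹)`. -/
noncomputable def qint (q : ℂ) (n : ℕ) : ℂ := (q ^ n - q⁻¹ ^ n) / (q - q⁻¹)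

/-- The quantum factorial `[n]! = [1][2]⋯[n]`, with `[0]! = 1`. -/
noncomputable def qfact (q : ℂ) : ℕ → ℂ
  | 0 => 1
  | n + 1 => qfact q n * qint q (n + 1)

/-- The truncated quantum exponential
`exp_q^<(x) = ∑_{n=0}^{r-1} (q^{n(n-1)/2}/[n]!) xⁿ ∈ ℂ[x]`. -/
noncomputable def qexpLt (q : ℂ) (r : ℕ) : Polynomial ℂ :=
  ∑ n ∈ Finset.range r, C (q ^ (n * (n - 1) / 2) / qfact q n) * X ^ n

open Finset Finset.Nat

theorem coeff_comp_neg_X {R : Type*} [Ring R] (p : R[X]) (n : ℕ) :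
    (p.comp (-X)).coeff n = (-1) ^ n * p.coeff n := by
  induction p using Polynomial.induction_on' with
  | add p q hp hq => rw [add_comp, coeff_add, coeff_add, hp, hq, mul_add]
  | monomial k a =>
    rw [← C_mul_X_pow_eq_monomial, C_mul_comp, X_pow_comp, neg_pow, ← C_1, ← C_neg, ← C_pow,
      coeff_C_mul, coeff_C_mul_X_pow, coeff_C_mul, coeff_X_pow]
    split_ifs with h
    · rw [h, mul_one, ((Commute.neg_one_left a).pow_left k).eq]
    · simp

section QuantumIntegers

variable (q : ℂ)

lemma qint_zero : qint q 0 = 0 := by simp [qint]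

lemma qint_inv (n : ℕ) : qint q⁻¹ n = qint q n := by
  rw [qint, qint, inv_inv, ← neg_sub (q ^ n), ← neg_sub q, neg_div_neg_eq]

lemma qint_add (a b : ℕ) : qint q (a + b) = q ^ b * qint q a + q⁻¹ ^ a * qint q b := by
  rw [qint, qint, qint, ← mul_div_assoc, ← mul_div_assoc, ← add_div, pow_add, pow_add]
  ring

variable {q} {r n : ℕ}

lemma IsPrimitiveRoot.pow_ne_inv_pow (hq : IsPrimitiveRoot q r) (hodd : Odd r) (hn0 : n ≠ 0)
    (hnr : n < r) : q ^ n ≠ q⁻¹ ^ n := by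
  intro h
  have hq0 : q ≠ 0 := hq.ne_zero hodd.pos.ne'
  apply (hq.pow_of_coprime 2 (Nat.coprime_two_left.2 hodd)).pow_ne_one_of_pos_of_lt hn0 hnr
  calc (q ^ 2) ^ n = q ^ n * q ^ n := by ring
    _ = q⁻¹ ^ n * q ^ n := congrArg (· * q ^ n) h
    _ = 1 := by rw [← mul_pow, inv_mul_cancel₀ hq0, one_pow]

lemma qint_ne_zero (hq : IsPrimitiveRoot q r) (hodd : Odd r) (hn0 : n ≠ 0) (hnr : n < r) :
    qint q n ≠ 0 := by
  have hden : q - q⁻¹ ≠ 0 := by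
    simpa using sub_ne_zero.2 (hq.pow_ne_inv_pow hodd one_ne_zero (by omega))
  exact div_ne_zero (sub_ne_zero.2 (hq.pow_ne_inv_pow hodd hn0 hnr)) hden

lemma qfact_ne_zero (hq : IsPrimitiveRoot q r) (hodd : Odd r) (hn : n < r) : qfact q n ≠ 0 := by
  induction n with
  | zero => exact one_ne_zero
  | succ n ih => exact mul_ne_zero (ih (by omega)) (qint_ne_zero hq hodd n.succ_ne_zero hn)

end QuantumIntegers

section Convolution

variable {q : ℂ} {c d : ℕ → ℂ}

lemma qint_succ_mul_sum_antidiagonal (k : ℕ)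
    (hc : ∀ i ≤ k, qint q (i + 1) * c (i + 1) = q ^ i * c i)
    (hd : ∀ j ≤ k, qint q (j + 1) * d (j + 1) = -(q⁻¹ ^ j * d j)) :
    qint q (k + 1) * ∑ p ∈ antidiagonal (k + 1), c p.1 * d p.2 =
      (q ^ k - q⁻¹ ^ k) * ∑ p ∈ antidiagonal k, c p.1 * d p.2 := by
  have hsplit : qint q (k + 1) * ∑ p ∈ antidiagonal (k + 1), c p.1 * d p.2 =
      ∑ p ∈ antidiagonal (k + 1), q ^ p.2 * (qint q p.1 * c p.1) * d p.2 +
        ∑ p ∈ antidiagonal (k + 1), q⁻¹ ^ p.1 * c p.1 * (qint q p.2 * d p.2) := by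
    rw [mul_sum, ← sum_add_distrib]
    refine sum_congr rfl fun p hp => ?_
    rw [← mem_antidiagonal.1 hp, qint_add]
    ring
  have hleft : ∑ p ∈ antidiagonal (k + 1), q ^ p.2 * (qint q p.1 * c p.1) * d p.2 =
      q ^ k * ∑ p ∈ antidiagonal k, c p.1 * d p.2 := by
    simp only [sum_antidiagonal_succ, qint_zero, zero_mul, mul_zero, zero_add, mul_sum]
    refine sum_congr rfl fun p hp => ?_
    have hpk := mem_antidiagonal.1 hp
    rw [hc p.1 (by omega), ← hpk, pow_add]
    ring
  have hright : ∑ p ∈ antidiagonal (k + 1), q⁻¹ ^ p.1 * c p.1 * (qint q p.2 * d p.2) =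
      -q⁻¹ ^ k * ∑ p ∈ antidiagonal k, c p.1 * d p.2 := by
    simp only [sum_antidiagonal_succ', qint_zero, zero_mul, mul_zero, zero_add, mul_sum]
    refine sum_congr rfl fun p hp => ?_
    have hpk := mem_antidiagonal.1 hp
    rw [hd p.2 (by omega), ← hpk, pow_add]
    ring
  rw [hsplit, hleft, hright]
  ring

lemma sum_antidiagonal_eq_zero_of_qint_mul_succ {N : ℕ}
    (hqint : ∀ n, n ≠ 0 → n < N → qint q n ≠ 0)
    (hc : ∀ i, i + 1 < N → qint q (i + 1) * c (i + 1) = q ^ i * c i)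
    (hd : ∀ j, j + 1 < N → qint q (j + 1) * d (j + 1) = -(q⁻¹ ^ j * d j)) :
    ∀ k, k + 1 < N → ∑ p ∈ antidiagonal (k + 1), c p.1 * d p.2 = 0 := by
  have hrec (k : ℕ) (hk : k + 1 < N) := qint_succ_mul_sum_antidiagonal k
    (fun i hi => hc i (by omega)) (fun j hj => hd j (by omega))
  intro k hk
  induction k with
  | zero => rw [← mul_eq_zero_iff_left (hqint 1 one_ne_zero hk), hrec 0 hk]; simp
  | succ k ih =>
    rw [← mul_eq_zero_iff_left (hqint (k + 2) (by omega) hk), hrec _ hk, ih (by omega), mul_zero]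

end Convolution

lemma coeff_qexpLt (q : ℂ) (r n : ℕ) :
    (qexpLt q r).coeff n = if n < r then q ^ (n * (n - 1) / 2) / qfact q n else 0 := by
  simp [qexpLt]

lemma qint_succ_mul_coeff_qexpLt {q : ℂ} {r n : ℕ} (hn : n + 1 < r) (hf : qfact q (n + 1) ≠ 0) :
    qint q (n + 1) * (qexpLt q r).coeff (n + 1) = q ^ n * (qexpLt q r).coeff n := by
  rw [coeff_qexpLt, coeff_qexpLt, if_pos hn, if_pos (by omega), Nat.triangle_succ, pow_add]
  rw [qfact] at hf ⊢
  field_simp [left_ne_zero_of_mul hf, right_ne_zero_of_mul hf]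

theorem truncated_qexp_inverse_general (r : ℕ) (hodd : Odd r)
    (q : ℂ) (hq : q = Complex.exp (2 * Real.pi * Complex.I / r)) :
    (X ^ r : Polynomial ℂ) ∣ qexpLt q r * (qexpLt q⁻¹ r).comp (-X) - 1 := by
  have hprim : IsPrimitiveRoot q r := hq ▸ Complex.isPrimitiveRoot_exp r hodd.pos.ne'
  have hA (i : ℕ) (hi : i + 1 < r) :=
    qint_succ_mul_coeff_qexpLt hi (qfact_ne_zero hprim hodd hi)
  have hB (j : ℕ) (hj : j + 1 < r) :
      qint q (j + 1) * ((qexpLt q⁻¹ r).comp (-X)).coeff (j + 1) =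
        -(q⁻¹ ^ j * ((qexpLt q⁻¹ r).comp (-X)).coeff j) := by
    rw [coeff_comp_neg_X, coeff_comp_neg_X, ← qint_inv, pow_succ, mul_left_comm,
      qint_succ_mul_coeff_qexpLt hj (qfact_ne_zero hprim.inv hodd hj)]
    ring
  rw [X_pow_dvd_iff]
  rintro (_ | k) hk
  · simp [coeff_qexpLt, coeff_comp_neg_X, hodd.pos, qfact]
  · rw [coeff_sub, coeff_mul, sum_antidiagonal_eq_zero_of_qint_mul_succ
      (fun _ => qint_ne_zero hprim hodd) hA hB k hk, coeff_one,
      if_neg k.succ_ne_zero, sub_zero]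

/-- For `r ≥ 3` odd and `q = exp(2πi/r)`, one has
`exp_q^<(x) · exp_{q⁻¹}^<(-x) ≡ 1 (mod xʳ)` in `ℂ[x]`. -/
theorem truncated_qexp_inverse (r : ℕ) (hr : 3 ≤ r) (hodd : Odd r)
    (q : ℂ) (hq : q = Complex.exp (2 * Real.pi * Complex.I / r)) :
    (X ^ r : Polynomial ℂ) ∣ qexpLt q r * (qexpLt q⁻¹ r).comp (-X) - 1 :=
  truncated_qexp_inverse_general r hodd q hq
end

section
/- Let A be an associative unital ℂ-algebra equipped with a conjugate-linear map † : A → A satisfying †(x·y) = †(y)·†(x) and †(†(x)) = x for all x, y ∈ A. Let V be a finite-dimensional simple A-module carrying a nondegenerate sesquilinear form (·|·) compatible with †. Then there exists λ ∈ ℂ, λ ≠ 0, such that the rescaled form λ·(·|·) is Hermitian, i.e. λ(w|v) = conj(λ(v|w)) for all v, w ∈ V. -/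
/-!
Nondegeneracy identifies `V` conjugate-linearly with its dual, so the conjugate transpose
`(v, w) ↦ conj (B w v)` of `B` is `(v, w) ↦ B (T v) w` for a ℂ-linear `T`. Compatibility of both
forms with `†` (using `† ∘ † = id`) makes `T` commute with the action of `A`, so `T = μ • id` by
Schur's lemma, i.e. `B w v = μ * conj (B v w)`. Applying this twice gives `|μ| = 1`, and then any
`λ` with `λ ^ 2 = conj μ` makes `λ • B` Hermitian.
-/

open Module Function

theorem LinearMap.surjective_of_injective_of_finrank_eq {K V W : Type*} [Field K]
    [AddCommGroup V] [Module K V] [AddCommGroup W] [Module K W] [FiniteDimensional K W]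
    {σ : K →+* K} [RingHomSurjective σ] (f : V →ₛₗ[σ] W) (hf : Injective f)
    (h : finrank K V = finrank K W) : Surjective f := by
  have hrank := lift_rank_le_of_surjective_injective σ f.rangeRestrict.toAddMonoidHom
    σ.surjective (f.injective_rangeRestrict_iff.mpr hf) (f.rangeRestrict.map_smulₛₗ)
  have : finrank K V ≤ finrank K (range f) := by
    simpa [finrank] using Cardinal.toNat_le_toNat hrank (by simp [Module.rank_lt_aleph0 K])
  exact range_eq_top.mp <| Submodule.eq_top_of_finrank_eq <|
    (Submodule.finrank_le _).antisymm (h ▸ this)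

theorem IsSimpleModule.exists_eq_smul_of_map_smul (k : Type*) {A V : Type*} [Field k]
    [IsAlgClosed k] [Ring A] [Algebra k A] [AddCommGroup V] [Module k V] [FiniteDimensional k V]
    [Module A V] [IsScalarTower k A V] [IsSimpleModule A V]
    (T : V →ₗ[k] V) (hT : ∀ (a : A) (v : V), T (a • v) = a • T v) :
    ∃ c : k, ∀ v, T v = c • v := by
  obtain ⟨c, hc⟩ := (IsSimpleModule.algebraMap_end_bijective_of_isAlgClosed k (A := A)).2
    { T with map_smul' := hT }
  exact ⟨c, fun v => (LinearMap.congr_fun hc v).symm⟩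

namespace LinearMap

variable {K V : Type*} [Field K] [StarRing K] [AddCommGroup V] [Module K V]

def conjTranspose (B : V →ₗ⋆[K] V →ₗ[K] K) : V →ₗ⋆[K] V →ₗ[K] K :=
  mk₂'ₛₗ (starRingEnd K) (RingHom.id K) (fun v w => star (B w v))
    (by simp) (by simp [starRingEnd_apply]) (by simp) (by simp [starRingEnd_apply])

@[simp]
theorem conjTranspose_apply (B : V →ₗ⋆[K] V →ₗ[K] K) (v w : V) :
    B.conjTranspose v w = star (B w v) := rfl

variable {B : V →ₗ⋆[K] V →ₗ[K] K}

theorem SeparatingLeft.injective (hB : B.SeparatingLeft) : Injective B :=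
  ker_eq_bot.mp (separatingLeft_iff_ker_eq_bot.mp hB)

theorem SeparatingLeft.bijective [FiniteDimensional K V] (hB : B.SeparatingLeft) : Bijective B :=
  ⟨hB.injective, B.surjective_of_injective_of_finrank_eq hB.injective
    Subspace.dual_finrank_eq.symm⟩

theorem SeparatingLeft.exists_comp_eq [FiniteDimensional K V] (hB : B.SeparatingLeft)
    (C : V →ₗ⋆[K] V →ₗ[K] K) : ∃ T : V →ₗ[K] V, ∀ v, B (T v) = C v :=
  let e := LinearEquiv.ofBijective B hB.bijective
  ⟨e.symm.toLinearMap.comp C, fun v => e.apply_symm_apply (C v)⟩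

theorem mul_star_self_eq_one_of_apply_eq_mul_star {μ : K} (hμ : ∀ v w, B w v = μ * star (B v w))
    (hB : B ≠ 0) : μ * star μ = 1 := by
  obtain ⟨v, w, hvw⟩ : ∃ v w, B v w ≠ 0 := by
    by_contra! h
    exact hB (ext₂ h)
  have : B v w = μ * star μ * B v w := by
    conv_lhs => rw [hμ, hμ, star_mul', star_star]
    ring
  exact (mul_eq_right₀ hvw).mp this.symm

section Compatible

variable {A : Type*} [Ring A] [Module A V] {dag : A → A}

theorem conjTranspose_smul_left (hdag : ∀ x, dag (dag x) = x)
    (hB : ∀ (x : A) v w, B (x • v) w = B v (dag x • w)) (x : A) (v w : V) :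
    B.conjTranspose (x • v) w = B.conjTranspose v (dag x • w) := by
  simp only [conjTranspose_apply, hB, hdag]

theorem SeparatingLeft.map_smul_of_comp_eq {C : V →ₗ⋆[K] V →ₗ[K] K} (hB : B.SeparatingLeft)
    (hBdag : ∀ (x : A) v w, B (x • v) w = B v (dag x • w))
    (hCdag : ∀ (x : A) v w, C (x • v) w = C v (dag x • w))
    {T : V →ₗ[K] V} (hT : ∀ v, B (T v) = C v) (x : A) (v : V) : T (x • v) = x • T v :=
  hB.injective <| ext fun w => by rw [hT, hCdag, ← hT, hBdag]

theorem exists_apply_eq_mul_star [IsAlgClosed K] [FiniteDimensional K V] [Algebra K A]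
    [IsScalarTower K A V] [IsSimpleModule A V] (hdag : ∀ x, dag (dag x) = x)
    (hBdag : ∀ (x : A) v w, B (x • v) w = B v (dag x • w)) (hB : B.SeparatingLeft) :
    ∃ μ : K, ∀ v w, B w v = μ * star (B v w) := by
  obtain ⟨T, hT⟩ := hB.exists_comp_eq B.conjTranspose
  obtain ⟨μ, hμ⟩ := IsSimpleModule.exists_eq_smul_of_map_smul K T
    (hB.map_smul_of_comp_eq hBdag (conjTranspose_smul_left hdag hBdag) hT)
  refine ⟨μ, fun v w => ?_⟩
  have h := congr($(hT v) w)
  rw [hμ, map_smulₛₗ, smul_apply, conjTranspose_apply, smul_eq_mul, starRingEnd_apply] at h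
  rw [← star_star (B w v), ← h, star_mul', star_star]

end Compatible

end LinearMap

open ComplexConjugate in
theorem Complex.exists_ne_zero_mul_eq_conj {μ : ℂ} (hμ : μ * conj μ = 1) :
    ∃ z : ℂ, z ≠ 0 ∧ z * μ = conj z := by
  obtain ⟨z, hz⟩ := IsAlgClosed.exists_pow_nat_eq (conj μ) two_pos
  have hnormμ : normSq μ = 1 := by exact_mod_cast (mul_conj μ).symm.trans hμ
  have hnorm : normSq z = 1 := by
    rw [← pow_eq_one_iff_of_nonneg (normSq_nonneg z) two_ne_zero, ← map_pow, hz, normSq_conj, hnormμ]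
  refine ⟨z, fun h => by simp [h] at hnorm, ?_⟩
  calc z * μ = z * conj z * conj z := by rw [mul_assoc, ← map_mul, ← sq, hz, conj_conj]
    _ = conj z := by rw [mul_conj, hnorm, ofReal_one, one_mul]

theorem simple_module_form_proportional_hermitian_general {A : Type*} [Ring A] [Algebra ℂ A]
    (dag : A →ₗ⋆[ℂ] A)
    (hdagInvol : ∀ x : A, dag (dag x) = x)
    {V : Type*} [AddCommGroup V] [Module ℂ V] [FiniteDimensional ℂ V]
    [Module A V] [IsScalarTower ℂ A V] [IsSimpleModule A V]
    (B : V →ₗ⋆[ℂ] V →ₗ[ℂ] ℂ)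
    (hnl : ∀ v : V, (∀ w : V, B v w = 0) → v = 0)
    (hcompat : ∀ (x : A) (v w : V), B (x • v) w = B v (dag x • w)) :
    ∃ lam : ℂ, lam ≠ 0 ∧
      ∀ v w : V, lam * B w v = (starRingEnd ℂ) (lam * B v w) := by
  have : Nontrivial V := IsSimpleModule.nontrivial A V
  obtain ⟨μ, hμ⟩ := LinearMap.exists_apply_eq_mul_star hdagInvol hcompat hnl
  obtain ⟨z, hz, hzμ⟩ := Complex.exists_ne_zero_mul_eq_conj <|
    LinearMap.mul_star_self_eq_one_of_apply_eq_mul_star hμ (LinearMap.SeparatingLeft.ne_zero hnl)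
  refine ⟨z, hz, fun v w => ?_⟩
  rw [hμ, map_mul, ← hzμ, mul_assoc, starRingEnd_apply]

/-- Let `A` be a unital complex algebra with a conjugate-linear involution `†` reversing
products, and let `V` be a finite-dimensional simple `A`-module with a nondegenerate
sesquilinear form compatible with `†`.  Then the form is proportional to a Hermitian one:
there is `λ ≠ 0` such that `λ·(·|·)` is Hermitian. -/
theorem simple_module_form_proportional_hermitian {A : Type*} [Ring A] [Algebra ℂ A]
    (dag : A →ₗ⋆[ℂ] A)
    (hdagMul : ∀ x y : A, dag (x * y) = dag y * dag x)
    (hdagInvol : ∀ x : A, dag (dag x) = x)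
    {V : Type*} [AddCommGroup V] [Module ℂ V] [FiniteDimensional ℂ V]
    [Module A V] [IsScalarTower ℂ A V] [IsSimpleModule A V]
    (B : V →ₗ⋆[ℂ] V →ₗ[ℂ] ℂ)
    (hnl : ∀ v : V, (∀ w : V, B v w = 0) → v = 0)
    (hnr : ∀ w : V, (∀ v : V, B v w = 0) → w = 0)
    (hcompat : ∀ (x : A) (v w : V), B (x • v) w = B v (dag x • w)) :
    ∃ lam : ℂ, lam ≠ 0 ∧
      ∀ v w : V, lam * B w v = (starRingEnd ℂ) (lam * B v w) :=
  simple_module_form_proportional_hermitian_general dag hdagInvol B hnl hcompat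
end
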